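/- (Projection identity for T_I-conjugation, identity (Ti).) Let r : ℤ → k be nowhere vanishing and let A⁺ = ∑_{j=0}^{d} M_{a_j} ∘ Δ^j be a difference operator. Write A⁺*(r) := ∑_{j=0}^{d} (Δ*)^j(a_j·r) for the pointwise application of the formal adjoint of A⁺ to r, and set w := Λ⁻¹(r)·Δ(Λ⁻¹(r⁻¹·A⁺*(r))) (pointwise). Then there exists a difference operator P such that, as linear operators on V: T_I(r) ∘ A⁺ ∘ T_I(r)⁻¹ = P − M_{Λ⁻¹(r⁻¹)} ∘ Δ⁻¹ ∘ M_w; i.e. the purely negative part of T_I(r)∘A⁺∘T_I(r)⁻¹ is −Λ⁻¹(r⁻¹)·Δ⁻¹·w. -/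
import Mathlib


open Finset

namespace CdKP

variable {k : Type*} [Field k]

/-- Shift operator: `(Λ f) n = f (n+1)`. -/
def Lam (f : ℤ → k) : ℤ → k := fun n => f (n + 1)

/-- Inverse shift operator: `(Λ⁻¹ f) n = f (n-1)`. -/
def LamInv (f : ℤ → k) : ℤ → k := fun n => f (n - 1)

/-- Difference operator `Δ = Λ - 1`. -/
def Dlt (f : ℤ → k) : ℤ → k := fun n => f (n + 1) - f n

/-- Formal adjoint difference operator `Δ* = Λ⁻¹ - 1`. -/
def DltStar (f : ℤ → k) : ℤ → k := fun n => f (n - 1) - f n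

/-- Inverse of `Δ` on `V`: `(Δ⁻¹ f) n = -∑_{m ≥ n} f m`. -/
noncomputable def Dinv (f : ℤ → k) : ℤ → k := fun n => -∑ᶠ m ∈ Set.Ici n, f m

/-- Membership in `V`: `f n = 0` for all sufficiently large `n`. -/
def InV (f : ℤ → k) : Prop := ∃ N : ℤ, ∀ n ≥ N, f n = 0

/-- Multiplication operator `M_g`: `(M_g f) n = g n * f n`. -/
def Mul (g f : ℤ → k) : ℤ → k := fun n => g n * f n

/-- Pointwise inverse of a function. -/
def pinv (r : ℤ → k) : ℤ → k := fun n => (r n)⁻¹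

/-- Integral-type gauge transformation operator `T_I(r) = M_{Λ⁻¹(r⁻¹)} ∘ Δ⁻¹ ∘ M_r`. -/
noncomputable def TI (r f : ℤ → k) : ℤ → k := Mul (LamInv (pinv r)) (Dinv (Mul r f))

/-- The inverse of `T_I(r)`: `M_{r⁻¹} ∘ Δ ∘ M_{Λ⁻¹(r)}`. -/
def TIinv (r f : ℤ → k) : ℤ → k := Mul (pinv r) (Dlt (Mul (LamInv r) f))

/-- A difference operator: a finite sum `∑_{j=0}^{d} M_{a_j} ∘ Δ^j`. -/
def IsDiffOp (P : (ℤ → k) → ℤ → k) : Prop :=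
  ∃ (d : ℕ) (a : ℕ → ℤ → k),
    ∀ (f : ℤ → k) (n : ℤ), P f n = ∑ j ∈ Finset.range (d + 1), a j n * Dlt^[j] f n

lemma dinv_eq_sum (f : ℤ → k) (N : ℤ) (hf : ∀ m ≥ N, f m = 0) (n : ℤ) :
    Dinv f n = -∑ m ∈ Finset.Ico n N, f m := by
  unfold Dinv
  congr 1
  apply finsum_mem_eq_sum_of_inter_support_eq
  ext m
  simp only [Set.mem_inter_iff, Set.mem_Ici, Function.mem_support, Finset.coe_Ico, Set.mem_Ico]
  constructor
  · rintro ⟨h1, h2⟩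
    refine ⟨⟨h1, ?_⟩, h2⟩
    by_contra h
    exact h2 (hf m (le_of_not_gt h))
  · rintro ⟨⟨h1, _⟩, h2⟩; exact ⟨h1, h2⟩

lemma telescope (f : ℤ → k) (n : ℤ) : ∀ N, n ≤ N → ∑ m ∈ Finset.Ico n N, Dlt f m = f N - f n := by
  refine Int.le_induction ?_ ?_
  · simp
  · intro N hN ih
    have hins : Finset.Ico n (N + 1) = insert N (Finset.Ico n N) := by
      ext x; simp only [Finset.mem_Ico, Finset.mem_insert]; omega
    rw [hins, Finset.sum_insert (by simp), ih]
    simp only [Dlt]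
    ring

lemma dinv_dlt (f : ℤ → k) (hf : InV f) (n : ℤ) : Dinv (Dlt f) n = f n := by
  obtain ⟨N, hN⟩ := hf
  have hz : ∀ m ≥ N, Dlt f m = 0 := fun m hm => by
    simp [Dlt, hN m hm, hN (m + 1) (by omega)]
  rcases le_or_gt n N with h | h
  · rw [dinv_eq_sum (Dlt f) N hz n, telescope f n N h, hN N le_rfl]
    ring
  · rw [dinv_eq_sum (Dlt f) N hz n, Finset.Ico_eq_empty (by omega), Finset.sum_empty,
      hN n (by omega)]
    simp

lemma dinv_add (f g : ℤ → k) (hf : InV f) (hg : InV g) (n : ℤ) :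
    Dinv (fun m => f m + g m) n = Dinv f n + Dinv g n := by
  obtain ⟨N1, h1⟩ := hf
  obtain ⟨N2, h2⟩ := hg
  rw [dinv_eq_sum (fun m => f m + g m) (max N1 N2)
      (fun m hm => by
        simp only [h1 m (le_trans (le_max_left _ _) hm),
          h2 m (le_trans (le_max_right _ _) hm), add_zero]),
    dinv_eq_sum f (max N1 N2) (fun m hm => h1 m (le_trans (le_max_left _ _) hm)) n,
    dinv_eq_sum g (max N1 N2) (fun m hm => h2 m (le_trans (le_max_right _ _) hm)) n,
    Finset.sum_add_distrib]
  ring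

lemma shift_eq_sum_choose :
    ∀ (i : ℕ) (f : ℤ → k) (n : ℤ),
      f (n + i) = ∑ j ∈ range (i + 1), (i.choose j : k) * Dlt^[j] f n := by
  intro i
  induction i with
  | zero => intro f n; simp
  | succ i ih =>
    intro f n
    have h1 : f (n + (i + 1 : ℕ)) = f (n + i) + Dlt f (n + i) := by
      simp only [Dlt]; push_cast; ring_nf
    have h2 := ih (Dlt f) n
    have h3 := ih f n
    have h4 : ∀ j : ℕ, Dlt^[j] (Dlt f) = Dlt^[j + 1] f := by
      intro j; rw [Function.iterate_succ_apply]
    rw [h1, h3, h2]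
    simp only [h4]
    rw [Finset.sum_range_succ' (fun j => ((i + 1).choose j : k) * Dlt^[j] f n) (i + 1)]
    have h5 : ∀ j ∈ range (i + 1),
        (((i + 1).choose (j + 1) : ℕ) : k) * Dlt^[j + 1] f n
          = (i.choose j : k) * Dlt^[j + 1] f n + (i.choose (j + 1) : k) * Dlt^[j + 1] f n := by
      intro j _
      rw [Nat.choose_succ_succ]
      push_cast
      ring
    rw [Finset.sum_congr rfl h5, Finset.sum_add_distrib]
    have h6 : ∑ j ∈ range (i + 1), (i.choose j : k) * Dlt^[j] f n
        = f n + ∑ j ∈ range i, (i.choose (j + 1) : k) * Dlt^[j + 1] f n := by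
      rw [Finset.sum_range_succ' (fun j => (i.choose j : k) * Dlt^[j] f n) i]
      simp [add_comm]
    have h7 : ∑ j ∈ range (i + 1), (i.choose (j + 1) : k) * Dlt^[j + 1] f n
        = ∑ j ∈ range i, (i.choose (j + 1) : k) * Dlt^[j + 1] f n := by
      rw [Finset.sum_range_succ]
      simp [Nat.choose_eq_zero_of_lt (by omega : i < i + 1)]
    rw [h7]
    simp only [Nat.choose_zero_right, Nat.cast_one, one_mul, Function.iterate_zero, id_eq]
    rw [h6]
    ring

lemma isDiffOp_of_app (m : ℕ) (c : ℕ → ℤ → k) (P : (ℤ → k) → ℤ → k)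
    (h : ∀ f n, P f n = ∑ i ∈ range (m + 1), c i n * f (n + i)) : IsDiffOp P := by
  refine ⟨m, fun j n => ∑ i ∈ range (m + 1), (i.choose j : k) * c i n, fun f n => ?_⟩
  rw [h]
  have h1 : ∀ i ∈ range (m + 1),
      c i n * f (n + i) = ∑ j ∈ range (m + 1), (i.choose j : k) * c i n * Dlt^[j] f n := by
    intro i hi
    rw [shift_eq_sum_choose i f n, Finset.mul_sum]
    have hsub : range (i + 1) ⊆ range (m + 1) := by
      intro x hx
      simp only [Finset.mem_range] at hx ⊢
      simp only [Finset.mem_range] at hi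
      omega
    have hz : ∀ j ∈ range (m + 1), j ∉ range (i + 1) →
        c i n * ((i.choose j : k) * Dlt^[j] f n) = 0 := by
      intro j _ hj
      simp only [Finset.mem_range, not_lt] at hj
      rw [Nat.choose_eq_zero_of_lt (by omega)]
      simp
    rw [Finset.sum_subset hsub hz]
    exact Finset.sum_congr rfl fun j _ => by ring
  rw [Finset.sum_congr rfl h1, Finset.sum_comm]
  refine Finset.sum_congr rfl fun j _ => ?_
  show _ = (∑ i ∈ range (m + 1), (i.choose j : k) * c i n) * Dlt^[j] f n
  rw [Finset.sum_mul]

def App (m : ℕ) (c : ℕ → ℤ → k) (f : ℤ → k) : ℤ → k :=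
  fun n => ∑ i ∈ range (m + 1), c i n * f (n + i)

def AdjApp (m : ℕ) (c : ℕ → ℤ → k) (g : ℤ → k) : ℤ → k :=
  fun n => ∑ i ∈ range (m + 1), c i (n - i) * g (n - i)

def ShiftRep (E E' : (ℤ → k) → ℤ → k) : Prop :=
  ∃ (m : ℕ) (c : ℕ → ℤ → k),
    (∀ f n, E f n = App m c f n) ∧ (∀ g n, E' g n = AdjApp m c g n)

lemma shiftRep_congr {E E' F F' : (ℤ → k) → ℤ → k} (h : ShiftRep E E')
    (h1 : ∀ f n, E f n = F f n) (h2 : ∀ g n, E' g n = F' g n) : ShiftRep F F' := by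
  obtain ⟨m, c, hc, hc'⟩ := h
  exact ⟨m, c, fun f n => (h1 f n).symm.trans (hc f n),
    fun g n => (h2 g n).symm.trans (hc' g n)⟩

lemma shiftRep_mul (g : ℤ → k) : ShiftRep (fun f => Mul g f) (fun f => Mul g f) := by
  refine ⟨0, fun _ => g, fun f n => ?_, fun f n => ?_⟩ <;>
    simp [App, AdjApp, Mul]

lemma shiftRep_dlt : ShiftRep (Dlt (k := k)) (DltStar (k := k)) := by
  refine ⟨1, fun i n => if i = 0 then -1 else 1, fun f n => ?_, fun g n => ?_⟩
  · simp [App, Dlt, Finset.sum_range_succ]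
    ring
  · simp [AdjApp, DltStar, Finset.sum_range_succ]
    ring

/-- Key double-sum reindexing. -/
lemma key_reindex (M1 M2 : ℕ) (φ : ℕ → ℕ → k) :
    ∑ i ∈ range (M1 + M2 + 1), ∑ l ∈ range (M1 + 1),
        (if l ≤ i ∧ i - l ≤ M2 then φ l (i - l) else 0)
      = ∑ l ∈ range (M1 + 1), ∑ j ∈ range (M2 + 1), φ l j := by
  rw [Finset.sum_comm]
  refine Finset.sum_congr rfl fun l hl => ?_
  simp only [Finset.mem_range] at hl
  have hsub : Finset.Ico l (l + M2 + 1) ⊆ range (M1 + M2 + 1) := by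
    intro x hx
    simp only [Finset.mem_Ico] at hx
    simp only [Finset.mem_range]
    omega
  rw [← Finset.sum_subset hsub (by
    intro x _ hx
    simp only [Finset.mem_Ico, not_and, not_lt] at hx
    rw [if_neg]
    rintro ⟨hle, hsub2⟩
    omega)]
  rw [show l + M2 + 1 = l + (M2 + 1) by ring, Finset.sum_Ico_eq_sum_range]
  simp only [add_tsub_cancel_left]
  refine Finset.sum_congr rfl fun j hj => ?_
  simp only [Finset.mem_range] at hj
  rw [if_pos ⟨by omega, by omega⟩]

lemma shiftRep_comp {E E' F F' : (ℤ → k) → ℤ → k} (hE : ShiftRep E E') (hF : ShiftRep F F') :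
    ShiftRep (fun f => E (F f)) (fun g => F' (E' g)) := by
  obtain ⟨m1, c1, h1, h1'⟩ := hE
  obtain ⟨m2, c2, h2, h2'⟩ := hF
  refine ⟨m1 + m2, fun i n => ∑ l ∈ range (m1 + 1),
      (if l ≤ i ∧ i - l ≤ m2 then c1 l n * c2 (i - l) (n + l) else 0), fun f n => ?_, fun g n => ?_⟩
  · show E (F f) n = _
    rw [h1, App]
    unfold App
    have : ∀ l ∈ range (m1 + 1), c1 l n * F f (n + l)
        = ∑ j ∈ range (m2 + 1), c1 l n * c2 j (n + l) * f (n + l + j) := by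
      intro l _
      rw [h2, App, Finset.mul_sum]
      exact Finset.sum_congr rfl fun j _ => by ring
    rw [Finset.sum_congr rfl this]
    rw [← key_reindex m1 m2 (fun l j => c1 l n * c2 j (n + l) * f (n + l + j))]
    refine Finset.sum_congr rfl fun i hi => ?_
    rw [Finset.sum_mul]
    refine Finset.sum_congr rfl fun l hl => ?_
    by_cases h : l ≤ i ∧ i - l ≤ m2
    · rw [if_pos h, if_pos h]
      have : ((i - l : ℕ) : ℤ) = (i : ℤ) - l := by
        have := h.1; omega
      rw [this]
      ring_nf
    · rw [if_neg h, if_neg h, zero_mul]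
  · show F' (E' g) n = _
    rw [h2', AdjApp]
    unfold AdjApp
    have : ∀ j ∈ range (m2 + 1), c2 j (n - j) * E' g (n - j)
        = ∑ l ∈ range (m1 + 1), c2 j (n - j) * c1 l (n - j - l) * g (n - j - l) := by
      intro j _
      rw [h1', AdjApp, Finset.mul_sum]
      exact Finset.sum_congr rfl fun l _ => by ring
    rw [Finset.sum_congr rfl this, Finset.sum_comm]
    rw [← key_reindex m1 m2 (fun l j => c2 j (n - (j : ℤ)) * c1 l (n - (j : ℤ) - l) * g (n - (j : ℤ) - l))]
    refine Finset.sum_congr rfl fun i hi => ?_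
    rw [Finset.sum_mul]
    refine Finset.sum_congr rfl fun l hl => ?_
    by_cases h : l ≤ i ∧ i - l ≤ m2
    · rw [if_pos h, if_pos h]
      have hc : ((i - l : ℕ) : ℤ) = (i : ℤ) - l := by
        have := h.1; omega
      rw [hc]
      ring_nf
    · rw [if_neg h, if_neg h, zero_mul]

lemma shiftRep_zero : ShiftRep (fun (_ : ℤ → k) (_ : ℤ) => (0 : k)) (fun _ _ => 0) := by
  refine ⟨0, fun _ _ => 0, fun f n => ?_, fun g n => ?_⟩ <;> simp [App, AdjApp]

lemma app_pad (m M : ℕ) (hm : m ≤ M) (c : ℕ → ℤ → k) (f : ℤ → k) (n : ℤ) :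
    App m c f n = ∑ i ∈ range (M + 1), (if i ≤ m then c i n else 0) * f (n + i) := by
  have step1 : App m c f n = ∑ i ∈ range (m + 1), (if i ≤ m then c i n else 0) * f (n + i) := by
    unfold App
    refine Finset.sum_congr rfl fun i hi => ?_
    simp only [Finset.mem_range] at hi
    rw [if_pos (by omega)]
  rw [step1]
  refine Finset.sum_subset (fun x hx => ?_) (fun i _ hi => ?_)
  · simp only [Finset.mem_range] at *; omega
  · simp only [Finset.mem_range, not_lt] at hi
    rw [if_neg (by omega), zero_mul]

lemma adjApp_pad (m M : ℕ) (hm : m ≤ M) (c : ℕ → ℤ → k) (g : ℤ → k) (n : ℤ) :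
    AdjApp m c g n = ∑ i ∈ range (M + 1), (if i ≤ m then c i (n - i) else 0) * g (n - i) := by
  have step1 : AdjApp m c g n
      = ∑ i ∈ range (m + 1), (if i ≤ m then c i (n - i) else 0) * g (n - i) := by
    unfold AdjApp
    refine Finset.sum_congr rfl fun i hi => ?_
    simp only [Finset.mem_range] at hi
    rw [if_pos (by omega)]
  rw [step1]
  refine Finset.sum_subset (fun x hx => ?_) (fun i _ hi => ?_)
  · simp only [Finset.mem_range] at *; omega
  · simp only [Finset.mem_range, not_lt] at hi
    rw [if_neg (by omega), zero_mul]

lemma shiftRep_add {E E' F F' : (ℤ → k) → ℤ → k} (hE : ShiftRep E E') (hF : ShiftRep F F') :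
    ShiftRep (fun f n => E f n + F f n) (fun g n => E' g n + F' g n) := by
  obtain ⟨m1, c1, h1, h1'⟩ := hE
  obtain ⟨m2, c2, h2, h2'⟩ := hF
  refine ⟨max m1 m2, fun i n => (if i ≤ m1 then c1 i n else 0) + (if i ≤ m2 then c2 i n else 0),
    fun f n => ?_, fun g n => ?_⟩
  · show E f n + F f n = _
    rw [h1, h2, app_pad m1 (max m1 m2) (le_max_left _ _) c1 f n,
      app_pad m2 (max m1 m2) (le_max_right _ _) c2 f n]
    unfold App
    rw [← Finset.sum_add_distrib]
    exact Finset.sum_congr rfl fun i _ => by ring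
  · show E' g n + F' g n = _
    rw [h1', h2', adjApp_pad m1 (max m1 m2) (le_max_left _ _) c1 g n,
      adjApp_pad m2 (max m1 m2) (le_max_right _ _) c2 g n]
    unfold AdjApp
    rw [← Finset.sum_add_distrib]
    exact Finset.sum_congr rfl fun i _ => by ring

lemma shiftRep_id : ShiftRep (fun (f : ℤ → k) => f) (fun f => f) := by
  refine ⟨0, fun _ _ => 1, fun f n => ?_, fun g n => ?_⟩ <;> simp [App, AdjApp]

lemma shiftRep_iter_dlt (j : ℕ) : ShiftRep (fun (f : ℤ → k) => Dlt^[j] f) (fun g => DltStar^[j] g) := by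
  induction j with
  | zero => simpa using shiftRep_id
  | succ j ih =>
    have := shiftRep_comp ih shiftRep_dlt
    refine shiftRep_congr this (fun f n => ?_) (fun g n => ?_)
    · rw [Function.iterate_succ_apply]
    · rw [Function.iterate_succ_apply']

lemma shiftRep_sum (a : ℕ → ℤ → k) : ∀ t : ℕ,
    ShiftRep (fun f n => ∑ j ∈ range t, a j n * Dlt^[j] f n)
      (fun g n => ∑ j ∈ range t, DltStar^[j] (Mul (a j) g) n) := by
  intro t
  induction t with
  | zero => simpa using shiftRep_zero
  | succ t ih =>
    have hterm : ShiftRep (fun (f : ℤ → k) n => a t n * Dlt^[t] f n)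
        (fun g n => DltStar^[t] (Mul (a t) g) n) :=
      shiftRep_congr (shiftRep_comp (shiftRep_mul (a t)) (shiftRep_iter_dlt t))
        (fun f n => rfl) (fun g n => rfl)
    refine shiftRep_congr (shiftRep_add ih hterm) (fun f n => ?_) (fun g n => ?_)
    · rw [Finset.sum_range_succ]
    · rw [Finset.sum_range_succ]

lemma div_by_dlt (m : ℕ) (c : ℕ → ℤ → k)
    (hA : ∀ n : ℤ, ∑ i ∈ range (m + 1), c i (n - i) = 0) :
    ∃ q : ℕ → ℤ → k, ∀ (f : ℤ → k) (n : ℤ),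
      Dlt (fun l => App m q f l) n = App m c f n := by
  set q : ℕ → ℤ → k := fun i n => -∑ l ∈ range (i + 1), c l (n + i - l) with hq
  have F0 : ∀ n, q 0 n = -c 0 n := by
    intro n; simp [hq]
  have F1 : ∀ (i : ℕ) (n : ℤ), q i (n + 1) = q (i + 1) n + c (i + 1) n := by
    intro i n
    simp only [hq]
    rw [Finset.sum_range_succ (fun l => c l (n + (i + 1 : ℕ) - l)) (i + 1)]
    have : ∀ l ∈ range (i + 1), c l (n + (i + 1 : ℕ) - l) = c l (n + 1 + i - l) := by
      intro l _
      congr 1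
      push_cast
      ring
    rw [Finset.sum_congr rfl this]
    have : n + ((i + 1 : ℕ) : ℤ) - ((i + 1 : ℕ) : ℤ) = n := by push_cast; ring
    rw [this]
    ring
  have F2 : ∀ n : ℤ, q m (n + 1) = 0 := by
    intro n
    have := hA (n + 1 + m)
    simp only [hq]
    rw [neg_eq_zero, ← this]
  refine ⟨q, fun f n => ?_⟩
  show App m q f (n + 1) - App m q f n = App m c f n
  unfold App
  rw [Finset.sum_range_succ (fun i => q i (n + 1) * f (n + 1 + i)) m, F2 n, zero_mul, add_zero]
  have e1 : ∀ i ∈ range m, q i (n + 1) * f (n + 1 + i)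
      = q (i + 1) n * f (n + (i + 1 : ℕ)) + c (i + 1) n * f (n + (i + 1 : ℕ)) := by
    intro i _
    rw [F1]
    have : n + 1 + (i : ℤ) = n + ((i + 1 : ℕ) : ℤ) := by push_cast; ring
    rw [this]
    ring
  rw [Finset.sum_congr rfl e1, Finset.sum_add_distrib]
  rw [Finset.sum_range_succ' (fun i => q i n * f (n + i)) m,
    Finset.sum_range_succ' (fun i => c i n * f (n + i)) m]
  simp only [Nat.cast_zero, add_zero, F0]
  ring

lemma inV_of_rep (m : ℕ) (c : ℕ → ℤ → k) (f F : ℤ → k)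
    (h : ∀ n, F n = App m c f n) (hf : InV f) : InV F := by
  obtain ⟨N, hN⟩ := hf
  refine ⟨N, fun n hn => ?_⟩
  rw [h n]
  unfold App
  refine Finset.sum_eq_zero fun i _ => ?_
  rw [hN (n + i) (by omega), mul_zero]

lemma inV_mul (w f : ℤ → k) (hf : InV f) : InV (Mul w f) := by
  obtain ⟨N, hN⟩ := hf
  exact ⟨N, fun n hn => by simp [Mul, hN n hn]⟩

/-- Identity (Ti): for a difference operator `A⁺ = ∑_{j=0}^{d} M_{a_j} ∘ Δ^j`, there is a
difference operator `P` with
`T_I(r) ∘ A⁺ ∘ T_I(r)⁻¹ = P - M_{Λ⁻¹(r⁻¹)} ∘ Δ⁻¹ ∘ M_w` on `V`, where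
`w = Λ⁻¹(r)·Δ(Λ⁻¹(r⁻¹·A⁺*(r)))` and `A⁺*(r) = ∑_j (Δ*)^j (a_j·r)`. -/
theorem TI_conj_diffOp {k : Type*} [Field k] (r : ℤ → k) (hr : ∀ n, r n ≠ 0)
    (d : ℕ) (a : ℕ → ℤ → k) :
    ∃ P : (ℤ → k) → ℤ → k, IsDiffOp P ∧
      ∀ f : ℤ → k, InV f → ∀ n : ℤ,
        TI r (fun m => ∑ j ∈ Finset.range (d + 1), a j m * Dlt^[j] (TIinv r f) m) n =
          P f n -
            LamInv (pinv r) n *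
              Dinv (Mul
                (fun m => LamInv r m *
                  Dlt (LamInv (fun l => (r l)⁻¹ *
                    ∑ j ∈ Finset.range (d + 1), DltStar^[j] (Mul (a j) r) l)) m) f) n := by
  classical
  -- the adjoint-applied-to-r function and the residue weight w
  set u : ℤ → k := fun l => (r l)⁻¹ * ∑ j ∈ Finset.range (d + 1), DltStar^[j] (Mul (a j) r) l
    with hu
  set w : ℤ → k := fun m => LamInv r m * Dlt (LamInv u) m with hw
  -- the local operator S = A⁺ and its formal adjoint
  set S : (ℤ → k) → ℤ → k := fun f n => ∑ j ∈ Finset.range (d + 1), a j n * Dlt^[j] f n with hS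
  set S' : (ℤ → k) → ℤ → k := fun g n => ∑ j ∈ Finset.range (d + 1), DltStar^[j] (Mul (a j) g) n
    with hS'
  have hSrep : ShiftRep S S' := shiftRep_sum a (d + 1)
  -- shift representation of TIinv with its adjoint
  have hTIrep : ShiftRep (TIinv r)
      (fun g => Mul (LamInv r) (DltStar (Mul (pinv r) g))) := by
    have c1 := shiftRep_comp (shiftRep_dlt (k := k)) (shiftRep_mul (LamInv r))
    have c2 := shiftRep_comp (shiftRep_mul (pinv r)) c1
    exact shiftRep_congr c2 (fun f n => rfl) (fun g n => rfl)
  -- the full conjugated-core operator E = M_r ∘ S ∘ TIinv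
  set Eop : (ℤ → k) → ℤ → k := fun f => Mul r (S (TIinv r f)) with hEop
  set Eadj : (ℤ → k) → ℤ → k :=
    fun g => Mul (LamInv r) (DltStar (Mul (pinv r) (S' (Mul r g)))) with hEadj
  have hErep : ShiftRep Eop Eadj :=
    shiftRep_congr (shiftRep_comp (shiftRep_mul r) (shiftRep_comp hSrep hTIrep))
      (fun f n => rfl) (fun g n => rfl)
  -- D = E + M_w together with its adjoint
  have hDrep : ShiftRep (fun f n => Eop f n + Mul w f n)
      (fun g n => Eadj g n + Mul w g n) := shiftRep_add hErep (shiftRep_mul w)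
  obtain ⟨m, c, hc, hc'⟩ := hDrep
  -- the adjoint of D kills constants
  have hA : ∀ n : ℤ, ∑ i ∈ Finset.range (m + 1), c i (n - i) = 0 := by
    intro n
    have h1 := hc' (fun _ => 1) n
    have hadj : AdjApp m c (fun _ => (1 : k)) n = ∑ i ∈ Finset.range (m + 1), c i (n - i) := by
      unfold AdjApp
      exact Finset.sum_congr rfl fun i _ => by rw [mul_one]
    rw [hadj] at h1
    rw [← h1]
    -- compute Eadj 1 n + w n = 0
    have h0 : Mul r (fun _ => (1 : k)) = r := funext fun t => by simp [Mul]
    have hSr : Mul (pinv r) (S' (Mul r fun _ => (1 : k))) = u := by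
      rw [h0]
      funext l
      simp only [hS', hu, Mul, pinv]
    show Eadj (fun _ => 1) n + Mul w (fun _ => 1) n = 0
    rw [hEadj]
    simp only [Mul, mul_one]
    rw [hSr]
    have e1 : DltStar u n = u (n - 1) - u n := rfl
    have e2 : w n = LamInv r n * (u (n + 1 - 1) - u (n - 1)) := rfl
    have e3 : n + 1 - 1 = n := by ring
    rw [e1, e2, e3]
    simp only [LamInv]
    ring
  -- divide D on the left by Δ
  obtain ⟨q, hdiv⟩ := div_by_dlt m c hA
  refine ⟨fun f n => LamInv (pinv r) n * App m q f n, ?_, ?_⟩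
  · refine isDiffOp_of_app m (fun i n => LamInv (pinv r) n * q i n) _ fun f n => ?_
    unfold App
    rw [Finset.mul_sum]
    exact Finset.sum_congr rfl fun i _ => by ring
  · intro f hf n
    -- the three relevant functions are in V
    have hQV : InV (fun l => App m q f l) := inV_of_rep m q f _ (fun _ => rfl) hf
    have hDV : InV (fun l => Eop f l + Mul w f l) := inV_of_rep m c f _ (hc f) hf
    have hWV : InV (Mul w f) := inV_mul w f hf
    have hEV : InV (Eop f) := by
      obtain ⟨N1, h1⟩ := hDV
      obtain ⟨N2, h2⟩ := hWV
      refine ⟨max N1 N2, fun l hl => ?_⟩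
      have h3 : Eop f l + Mul w f l = 0 := h1 l (le_trans (le_max_left _ _) hl)
      have h2' := h2 l (le_trans (le_max_right _ _) hl)
      rw [h2', add_zero] at h3
      exact h3
    -- Q f = Δ⁻¹ Δ (Q f) = Δ⁻¹ (D f) = Δ⁻¹ (E f) + Δ⁻¹ (M_w f)
    have key : App m q f n = Dinv (Eop f) n + Dinv (Mul w f) n := by
      have h1 : App m q f n = Dinv (Dlt fun l => App m q f l) n :=
        (dinv_dlt _ hQV n).symm
      have h2 : (Dlt fun l => App m q f l) = fun l => Eop f l + Mul w f l := by
        funext l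
        rw [hdiv f l, ← hc f l]
      rw [h1, h2, dinv_add _ _ hEV hWV]
    -- assemble
    show LamInv (pinv r) n * Dinv (Mul r (S (TIinv r f))) n
        = LamInv (pinv r) n * App m q f n - LamInv (pinv r) n * Dinv (Mul w f) n
    have : Dinv (Mul r (S (TIinv r f))) n = Dinv (Eop f) n := rfl
    rw [this]
    have hE' : Dinv (Eop f) n = App m q f n - Dinv (Mul w f) n := by
      rw [key]; ring
    rw [hE']
    ring

end CdKP
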